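/- For every real γ > 0 and every c ∈ (0, 1), ∫₀^∞ ∫₀^{x₂} exp(−x₂) · x₁ · x₂ · exp( −(c·x₂² + (1 − c)·x₁²)/(4γ²) ) dx₁ dx₂ = (4γ⁴/(c·(1 − c))) · (1 − (2γ/√c)·W(γ/√c)) − (4γ⁴/(1 − c)) · (1 − 2γ·W(γ)). -/

import Mathlib

/-!
Integrating out `x₁` first is elementary, since `x₁ e^{-k x₁²}` has primitive
`-e^{-k x₁²}/(2k)` with `k = (1 - c)/(4γ²)`. What remains is `2γ²/(1 - c)` times the difference
of `∫₀^∞ x e^{-x - x²/(4a²)} dx` at `a = γ/√c` and `a = γ`. Completing the square,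
`-x - x²/(4a²) = a² - (x/(2a) + a)²`, so `x e^{-x - x²/(4a²)}` has the primitive
`-2a² e^{-x - x²/(4a²)} + 4a³ e^{a²} ∫_{x/(2a)+a}^∞ e^{-t²} dt`, which vanishes at `∞` and
equals `-2a² (1 - 2a W(a))` at `0`.
-/

open MeasureTheory Real

/-- `W x = exp (x²) · ∫_x^∞ exp (−t²) dt`, i.e. `(√π/2)·erfcx x`. -/
noncomputable def W (x : ℝ) : ℝ := Real.exp (x ^ 2) * ∫ t in Set.Ioi x, Real.exp (-(t ^ 2))

open Filter Set Topology

section Tail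

variable {E : Type*} [NormedAddCommGroup E] [NormedSpace ℝ E] {f : ℝ → E} {a u : ℝ}

theorem hasDerivAt_integral_Ioi [CompleteSpace E] (hf : IntegrableOn f (Ioi a)) (hu : a < u)
    (hfu : ContinuousAt f u) : HasDerivAt (fun v ↦ ∫ t in Ioi v, f t) (-f u) u := by
  have hsplit : ∀ v ∈ Ioi a, ∫ t in Ioi v, f t = (∫ t in Ioi a, f t) - ∫ t in a..v, f t :=
    fun v hv ↦ eq_sub_of_add_eq' <| intervalIntegral.integral_interval_add_Ioi hf
      (hf.mono_set (Ioi_subset_Ioi hv.le))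
  have hderiv : HasDerivAt (fun v ↦ ∫ t in a..v, f t) (f u) u :=
    intervalIntegral.integral_hasDerivAt_right
      ((intervalIntegrable_iff_integrableOn_Ioc_of_le hu.le).2 (hf.mono_set Ioc_subset_Ioi_self))
      (AEStronglyMeasurable.stronglyMeasurableAtFilter_of_mem hf.aestronglyMeasurable
        (Ioi_mem_nhds hu)) hfu
  exact (hderiv.const_sub _).congr_of_eventuallyEq
    (eventually_of_mem (Ioi_mem_nhds hu) hsplit)

theorem tendsto_integral_Ioi_atTop (hf : IntegrableOn f (Ioi a)) :
    Tendsto (fun v ↦ ∫ t in Ioi v, f t) atTop (𝓝 0) := by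
  have hempty : ⋂ v : ℝ, Ioi v = ∅ :=
    iInter_eq_empty_iff.2 fun x ↦ ⟨x, lt_irrefl x⟩
  simpa [hempty] using tendsto_setIntegral_of_antitone (μ := volume) (f := f)
    (fun _ ↦ measurableSet_Ioi) (fun _ _ h ↦ Ioi_subset_Ioi h) ⟨a, hf⟩

end Tail

theorem intervalIntegral_mul_exp_neg_mul_sq {k : ℝ} (hk : k ≠ 0) (s : ℝ) :
    ∫ x in (0 : ℝ)..s, x * exp (-(k * x ^ 2)) = (1 - exp (-(k * s ^ 2))) / (2 * k) := by
  have hderiv (x : ℝ) :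
      HasDerivAt (fun x ↦ -exp (-(k * x ^ 2)) / (2 * k)) (x * exp (-(k * x ^ 2))) x := by
    refine (((hasDerivAt_pow 2 x).const_mul k).fun_neg.exp.fun_neg.div_const
      (2 * k)).congr_deriv ?_
    field_simp
    ring
  rw [intervalIntegral.integral_eq_sub_of_hasDerivAt (fun x _ ↦ hderiv x)
    (Continuous.intervalIntegrable (by fun_prop) _ _)]
  field_simp
  simp only [ne_eq, OfNat.ofNat_ne_zero, not_false_eq_true, zero_pow, mul_zero, neg_zero,
    exp_zero]
  ring

theorem integrable_exp_neg_sq : Integrable fun t : ℝ ↦ exp (-(t ^ 2)) := by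
  simpa using integrable_exp_neg_mul_sq one_pos

section Primitive

variable {a : ℝ}

noncomputable def primitiveMulExpNegSubSqDiv (a x : ℝ) : ℝ :=
  -(2 * a ^ 2) * exp (-x - x ^ 2 / (4 * a ^ 2))
    + 4 * a ^ 3 * exp (a ^ 2) * ∫ t in Ioi (x / (2 * a) + a), exp (-(t ^ 2))

theorem exp_neg_sub_sq_div_eq (ha : a ≠ 0) (x : ℝ) :
    exp (-x - x ^ 2 / (4 * a ^ 2)) = exp (a ^ 2) * exp (-(x / (2 * a) + a) ^ 2) := by
  rw [← exp_add]
  congr 1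
  field_simp
  ring

theorem hasDerivAt_primitiveMulExpNegSubSqDiv (ha : a ≠ 0) (x : ℝ) :
    HasDerivAt (primitiveMulExpNegSubSqDiv a) (x * exp (-x - x ^ 2 / (4 * a ^ 2))) x := by
  have hexp : HasDerivAt (fun x ↦ exp (-x - x ^ 2 / (4 * a ^ 2)))
      (exp (-x - x ^ 2 / (4 * a ^ 2)) * (-1 - 2 * x / (4 * a ^ 2))) x := by
    refine ((hasDerivAt_id x).fun_neg.fun_sub
      ((hasDerivAt_pow 2 x).div_const _)).exp.congr_deriv ?_
    simp
  have hshift : HasDerivAt (fun x ↦ x / (2 * a) + a) (1 / (2 * a)) x :=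
    ((hasDerivAt_id x).div_const _).add_const a
  have htail : HasDerivAt (fun x ↦ ∫ t in Ioi (x / (2 * a) + a), exp (-(t ^ 2)))
      (-exp (-(x / (2 * a) + a) ^ 2) * (1 / (2 * a))) x :=
    (hasDerivAt_integral_Ioi integrable_exp_neg_sq.integrableOn (sub_one_lt _)
      (by fun_prop)).comp x hshift
  refine ((hexp.const_mul _).add (htail.const_mul _)).congr_deriv ?_
  rw [exp_neg_sub_sq_div_eq ha]
  field_simp
  ring

theorem tendsto_primitiveMulExpNegSubSqDiv_atTop (ha : 0 < a) :
    Tendsto (primitiveMulExpNegSubSqDiv a) atTop (𝓝 0) := by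
  have hexp : Tendsto (fun x ↦ exp (-x - x ^ 2 / (4 * a ^ 2))) atTop (𝓝 0) := by
    refine tendsto_exp_atBot.comp (tendsto_atBot_mono (fun x ↦ ?_) tendsto_neg_atTop_atBot)
    have : 0 ≤ x ^ 2 / (4 * a ^ 2) := by positivity
    linarith
  have htail : Tendsto (fun x ↦ ∫ t in Ioi (x / (2 * a) + a), exp (-(t ^ 2))) atTop (𝓝 0) :=
    (tendsto_integral_Ioi_atTop (a := 0) integrable_exp_neg_sq.integrableOn).comp
      (tendsto_atTop_add_const_right _ a (tendsto_id.atTop_div_const (by positivity)))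
  have h := (hexp.const_mul (-(2 * a ^ 2))).add (htail.const_mul (4 * a ^ 3 * exp (a ^ 2)))
  rwa [mul_zero, mul_zero, add_zero] at h

theorem primitiveMulExpNegSubSqDiv_zero :
    primitiveMulExpNegSubSqDiv a 0 = -(2 * a ^ 2 * (1 - 2 * a * W a)) := by
  simp only [primitiveMulExpNegSubSqDiv, W, neg_zero, ne_eq, OfNat.ofNat_ne_zero,
    not_false_eq_true, zero_pow, zero_div, sub_self, exp_zero, mul_one, zero_add]
  ring

theorem integrableOn_Ioi_mul_exp_neg_sub_sq_div (ha : 0 < a) :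
    IntegrableOn (fun x ↦ x * exp (-x - x ^ 2 / (4 * a ^ 2))) (Ioi 0) :=
  integrableOn_Ioi_deriv_of_nonneg' (fun x _ ↦ hasDerivAt_primitiveMulExpNegSubSqDiv ha.ne' x)
    (fun _ hx ↦ mul_nonneg hx.le (exp_pos _).le)
    (tendsto_primitiveMulExpNegSubSqDiv_atTop ha)

theorem integral_Ioi_mul_exp_neg_sub_sq_div (ha : 0 < a) :
    ∫ x in Ioi 0, x * exp (-x - x ^ 2 / (4 * a ^ 2)) = 2 * a ^ 2 * (1 - 2 * a * W a) := by
  rw [integral_Ioi_of_hasDerivAt_of_nonneg'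
    (fun x _ ↦ hasDerivAt_primitiveMulExpNegSubSqDiv ha.ne' x)
    (fun _ hx ↦ mul_nonneg hx.le (exp_pos _).le)
    (tendsto_primitiveMulExpNegSubSqDiv_atTop ha), primitiveMulExpNegSubSqDiv_zero, zero_sub,
    neg_neg]

end Primitive

theorem intervalIntegral_selfblocking_inner {γ c : ℝ} (hγ : γ ≠ 0) (hc₀ : 0 < c) (hc₁ : c ≠ 1)
    (x : ℝ) :
    ∫ x₁ in (0 : ℝ)..x,
        exp (-x) * x₁ * x * exp (-((c * x ^ 2 + (1 - c) * x₁ ^ 2) / (4 * γ ^ 2)))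
      = 2 * γ ^ 2 / (1 - c) * (x * exp (-x - x ^ 2 / (4 * (γ / √c) ^ 2))
          - x * exp (-x - x ^ 2 / (4 * γ ^ 2))) := by
  have hc₁' : 1 - c ≠ 0 := sub_ne_zero.2 hc₁.symm
  set k := (1 - c) / (4 * γ ^ 2) with hk
  have hsplit (x₁ : ℝ) :
      exp (-x) * x₁ * x * exp (-((c * x ^ 2 + (1 - c) * x₁ ^ 2) / (4 * γ ^ 2)))
        = exp (-x) * x * exp (-(c * x ^ 2 / (4 * γ ^ 2))) * (x₁ * exp (-(k * x₁ ^ 2))) := by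
    rw [show -((c * x ^ 2 + (1 - c) * x₁ ^ 2) / (4 * γ ^ 2))
        = -(c * x ^ 2 / (4 * γ ^ 2)) + -(k * x₁ ^ 2) by ring, exp_add]
    ring
  rw [intervalIntegral.integral_congr (fun x₁ _ ↦ hsplit x₁), intervalIntegral.integral_const_mul,
    intervalIntegral_mul_exp_neg_mul_sq (div_ne_zero hc₁' (by positivity)), div_pow, sq_sqrt hc₀.le]
  have hexp₁ :
      exp (-x - x ^ 2 / (4 * (γ ^ 2 / c))) = exp (-x) * exp (-(c * x ^ 2 / (4 * γ ^ 2))) := by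
    rw [← exp_add]
    congr 1
    field_simp
    ring
  have hexp₂ : exp (-x - x ^ 2 / (4 * γ ^ 2))
      = exp (-x) * exp (-(c * x ^ 2 / (4 * γ ^ 2))) * exp (-(k * x ^ 2)) := by
    rw [← exp_add, ← exp_add, hk]
    congr 1
    field_simp
    ring
  rw [hexp₁, hexp₂, hk]
  field_simp
  ring

theorem selfblocking_marginal_term_x₂ (γ c : ℝ) (hγ : 0 < γ) (hc : c ∈ Set.Ioo (0 : ℝ) 1) :
    ∫ x₂ in Set.Ioi (0 : ℝ),
        ∫ x₁ in (0 : ℝ)..x₂,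
          Real.exp (-x₂) * x₁ * x₂ *
            Real.exp (-((c * x₂ ^ 2 + (1 - c) * x₁ ^ 2) / (4 * γ ^ 2)))
      = (4 * γ ^ 4 / (c * (1 - c))) * (1 - (2 * γ / Real.sqrt c) * W (γ / Real.sqrt c))
        - (4 * γ ^ 4 / (1 - c)) * (1 - 2 * γ * W γ) := by
  obtain ⟨hc₀, hc₁⟩ := hc
  have ha : 0 < γ / √c := by positivity
  simp_rw [intervalIntegral_selfblocking_inner hγ.ne' hc₀ hc₁.ne]
  rw [integral_const_mul, integral_sub (integrableOn_Ioi_mul_exp_neg_sub_sq_div ha)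
    (integrableOn_Ioi_mul_exp_neg_sub_sq_div hγ), integral_Ioi_mul_exp_neg_sub_sq_div ha,
    integral_Ioi_mul_exp_neg_sub_sq_div hγ, div_pow, sq_sqrt hc₀.le]
  field_simp
  ring
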